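/- arXiv:1712.03924 — 2 statements merged into one kernel-verified Lean document; each statement's English description precedes it below -/
import Mathlib

section
/- The set of critical points of F in ℂˣ × ℂˣ is exactly {(φ, φ), (ψ, ψ), (−1, −1)}, where φ = (1 + √5)/2 and ψ = (1 − √5)/2; here a critical point is a point at which both partial derivatives ∂F/∂u and ∂F/∂v vanish. -/
open Complex

/-- The Pascaleff–Tonkonog potential function of the monotone Lagrangian torus in the
monotone blow-up of `ℂP²` at four points (Novikov parameter `T` normalized to `1`). -/
noncomputable def PTpotential (u v : ℂ) : ℂ :=
  (1 + u + v) * (1 + u⁻¹) * (1 + v⁻¹) - 3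

/-- The golden ratio `(1 + √5)/2` as a complex number. -/
noncomputable def goldenφ : ℂ := (1 + (Real.sqrt 5 : ℂ)) / 2

/-- The conjugate golden ratio `(1 - √5)/2` as a complex number. -/
noncomputable def goldenψ : ℂ := (1 - (Real.sqrt 5 : ℂ)) / 2

/-!
Away from the axes, `∂F/∂u = (1 + v⁻¹)(u² - 1 - v)/u²` and, by the symmetry `F(u, v) = F(v, u)`,
`∂F/∂v = (1 + u⁻¹)(v² - 1 - u)/v²`. So a critical point lies on `v = -1` or on the parabola
`u² = 1 + v`, and on `u = -1` or on `v² = 1 + u`. Mixing a line with a parabola forces a zero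
coordinate, and subtracting the two parabolas gives `(u - v)(u + v + 1) = 0`, where again
`u + v + 1 = 0` forces a zero coordinate. What remains is `(-1, -1)` and the diagonal points
with `u² = u + 1`, i.e. `u = φ` or `u = ψ`.
-/

section Algebra

variable {R : Type*} [CommRing R] [NoZeroDivisors R]

theorem sq_eq_add_one_iff_of_add_eq_one_of_mul_eq_neg_one {a b z : R}
    (hadd : a + b = 1) (hmul : a * b = -1) : z ^ 2 = z + 1 ↔ z = a ∨ z = b := by
  have hfactor : z ^ 2 - (z + 1) = (z - a) * (z - b) := by linear_combination z * hadd - hmul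
  rw [← sub_eq_zero, hfactor, mul_eq_zero, sub_eq_zero, sub_eq_zero]

theorem eq_of_sq_eq_one_add_of_sq_eq_one_add {u v : R} (hu : u ≠ 0) (hv : v ≠ 0)
    (hu₂ : u ^ 2 = 1 + v) (hv₂ : v ^ 2 = 1 + u) : u = v := by
  have hprod : (u - v) * (u + v + 1) = 0 := by linear_combination hu₂ - hv₂
  rcases mul_eq_zero.1 hprod with h | h
  · exact sub_eq_zero.1 h
  · have hu' : u * (u + 1) = 0 := by linear_combination hu₂ + h
    have hu₁ : u = -1 := by linear_combination (mul_eq_zero.1 hu').resolve_left hu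
    exact absurd (by linear_combination h - hu₁) hv

theorem critical_system_iff {u v : R} (hu : u ≠ 0) (hv : v ≠ 0) :
    ((v = -1 ∨ u ^ 2 = 1 + v) ∧ (u = -1 ∨ v ^ 2 = 1 + u)) ↔
      (u = -1 ∧ v = -1) ∨ (u = v ∧ u ^ 2 = u + 1) := by
  constructor
  · rintro ⟨hv₁ | hu₂, hu₁ | hv₂⟩
    · exact Or.inl ⟨hu₁, hv₁⟩
    · subst hv₁
      exact absurd (by linear_combination -hv₂) hu
    · subst hu₁
      exact absurd (by linear_combination -hu₂) hv
    · obtain rfl := eq_of_sq_eq_one_add_of_sq_eq_one_add hu hv hu₂ hv₂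
      exact Or.inr ⟨rfl, by linear_combination hu₂⟩
  · rintro (⟨rfl, rfl⟩ | ⟨rfl, h⟩)
    · exact ⟨Or.inl rfl, Or.inl rfl⟩
    · exact ⟨Or.inr (by linear_combination h), Or.inr (by linear_combination h)⟩

end Algebra

theorem goldenφ_eq_goldenRatio : goldenφ = (Real.goldenRatio : ℂ) := by
  simp [goldenφ, Real.goldenRatio]

theorem goldenψ_eq_goldenConj : goldenψ = (Real.goldenConj : ℂ) := by
  simp [goldenψ, Real.goldenConj]

theorem sq_eq_add_one_iff_eq_goldenφ_or_eq_goldenψ {z : ℂ} :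
    z ^ 2 = z + 1 ↔ z = goldenφ ∨ z = goldenψ := by
  rw [goldenφ_eq_goldenRatio, goldenψ_eq_goldenConj]
  exact sq_eq_add_one_iff_of_add_eq_one_of_mul_eq_neg_one
    (mod_cast Real.goldenRatio_add_goldenConj) (mod_cast Real.goldenRatio_mul_goldenConj)

theorem PTpotential_comm (u v : ℂ) : PTpotential u v = PTpotential v u := by
  unfold PTpotential
  ring

theorem hasDerivAt_PTpotential_left {u : ℂ} (v : ℂ) (hu : u ≠ 0) :
    HasDerivAt (fun x => PTpotential x v) ((1 + v⁻¹) * ((u ^ 2 - 1 - v) / u ^ 2)) u := by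
  have h : HasDerivAt (fun x => (1 + x + v) * (1 + x⁻¹) * (1 + v⁻¹) - 3)
      ((1 * (1 + u⁻¹) + (1 + u + v) * -(u ^ 2)⁻¹) * (1 + v⁻¹)) u :=
    ((((hasDerivAt_id' u).const_add 1).add_const v).mul
      ((hasDerivAt_inv hu).const_add 1)).mul_const _ |>.sub_const 3
  refine h.congr_deriv ?_
  field_simp
  ring

theorem deriv_PTpotential_left_eq_zero_iff {u : ℂ} (v : ℂ) (hu : u ≠ 0) :
    deriv (fun x => PTpotential x v) u = 0 ↔ v = -1 ∨ u ^ 2 = 1 + v := by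
  rw [(hasDerivAt_PTpotential_left v hu).deriv, mul_eq_zero,
    div_eq_zero_iff, or_iff_left (pow_ne_zero 2 hu), sub_sub, sub_eq_zero,
    add_eq_zero_iff_eq_neg', inv_eq_iff_eq_inv, inv_neg, inv_one]

theorem deriv_PTpotential_right_eq_zero_iff (u : ℂ) {v : ℂ} (hv : v ≠ 0) :
    deriv (fun y => PTpotential u y) v = 0 ↔ u = -1 ∨ v ^ 2 = 1 + u := by
  simpa only [PTpotential_comm u] using deriv_PTpotential_left_eq_zero_iff u hv

/-- The set of critical points of `F(u,v) = (1+u+v)(1+u⁻¹)(1+v⁻¹) - 3` in `ℂˣ × ℂˣ`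
is exactly `{(φ, φ), (ψ, ψ), (-1, -1)}`, where `φ = (1+√5)/2` and `ψ = (1-√5)/2`. -/
theorem critical_points_of_PTpotential :
    ∀ u v : ℂ, u ≠ 0 → v ≠ 0 →
      ((deriv (fun x => PTpotential x v) u = 0 ∧ deriv (fun y => PTpotential u y) v = 0) ↔
        (u, v) ∈ ({(goldenφ, goldenφ), (goldenψ, goldenψ), (-1, -1)} : Set (ℂ × ℂ))) := by
  intro u v hu hv
  rw [deriv_PTpotential_left_eq_zero_iff v hu, deriv_PTpotential_right_eq_zero_iff u hv,
    critical_system_iff hu hv, sq_eq_add_one_iff_eq_goldenφ_or_eq_goldenψ]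
  simp only [Set.mem_insert_iff, Set.mem_singleton_iff, Prod.mk.injEq]
  constructor
  · rintro (h | ⟨rfl, h | h⟩) <;> simp [h]
  · rintro (⟨rfl, rfl⟩ | ⟨rfl, rfl⟩ | h) <;> simp_all
end

section
/- Let A be a commutative ring in which 2 is invertible, let s ∈ A be a unit, and let x ∈ A satisfy x³ = 4s²·x. Define e₊ := (4s)⁻¹·x + (8s²)⁻¹·x² and e₋ := −(4s)⁻¹·x + (8s²)⁻¹·x². Then e₊² = e₊, e₋² = e₋, e₊·e₋ = 0, e₊ + e₋ = (4s²)⁻¹·x², and x·e₊ = 2s·e₊, x·e₋ = −2s·e₋. -/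
/-- `e₊ = (4s)⁻¹·x + (8s²)⁻¹·x²` -/
noncomputable def ePlus {A : Type*} [CommRing A] (s x : A) : A :=
  Ring.inverse (4 * s) * x + Ring.inverse (8 * s ^ 2) * x ^ 2

/-- `e₋ = -(4s)⁻¹·x + (8s²)⁻¹·x²` -/
noncomputable def eMinus {A : Type*} [CommRing A] (s x : A) : A :=
  -(Ring.inverse (4 * s) * x) + Ring.inverse (8 * s ^ 2) * x ^ 2

/-- Let `A` be a commutative ring in which `2` is invertible, `s ∈ A` a unit, and
`x ∈ A` with `x³ = 4s²·x`.  With `e₊ := (4s)⁻¹·x + (8s²)⁻¹·x²` and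
`e₋ := -(4s)⁻¹·x + (8s²)⁻¹·x²` one has `e₊² = e₊`, `e₋² = e₋`, `e₊·e₋ = 0`,
`e₊ + e₋ = (4s²)⁻¹·x²`, `x·e₊ = 2s·e₊` and `x·e₋ = -2s·e₋`. -/
theorem ePlus_eMinus_orthogonal_idempotents
    {A : Type*} [CommRing A] (h2 : IsUnit (2 : A)) (s : Aˣ) (x : A)
    (hx : x ^ 3 = 4 * (s : A) ^ 2 * x) :
    ePlus (s : A) x * ePlus (s : A) x = ePlus (s : A) x ∧
    eMinus (s : A) x * eMinus (s : A) x = eMinus (s : A) x ∧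
    ePlus (s : A) x * eMinus (s : A) x = 0 ∧
    ePlus (s : A) x + eMinus (s : A) x = Ring.inverse (4 * (s : A) ^ 2) * x ^ 2 ∧
    x * ePlus (s : A) x = 2 * (s : A) * ePlus (s : A) x ∧
    x * eMinus (s : A) x = -(2 * (s : A)) * eMinus (s : A) x := by
  have h4 : IsUnit (4 * (s : A)) := by
    have : IsUnit (4 : A) := by
      have := h2.mul h2
      simpa [show (4:A) = 2*2 by norm_num] using this
    exact this.mul s.isUnit
  have h8 : IsUnit (8 * (s : A) ^ 2) := by
    have h8' : IsUnit (8 : A) := by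
      have := (h2.mul h2).mul h2
      simpa [show (8:A) = 2*2*2 by norm_num] using this
    exact h8'.mul (s.isUnit.pow 2)
  have h4s : IsUnit (4 * (s : A) ^ 2) := by
    have : IsUnit (4 : A) := by
      have := h2.mul h2
      simpa [show (4:A) = 2*2 by norm_num] using this
    exact this.mul (s.isUnit.pow 2)
  set a : A := Ring.inverse (4 * (s : A)) with ha_def
  have ha : a * (4 * (s : A)) = 1 := Ring.inverse_mul_cancel _ h4
  have key8 : (8 * (s : A) ^ 2) * (2 * a ^ 2) = 1 := by
    linear_combination (4 * a * (s : A) + 1) * ha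
  have h8inv : Ring.inverse (8 * (s : A) ^ 2) * (8 * (s : A) ^ 2) = 1 :=
    Ring.inverse_mul_cancel _ h8
  have hb2 : Ring.inverse (8 * (s : A) ^ 2) = 2 * a ^ 2 := by
    linear_combination (-(Ring.inverse (8 * (s : A) ^ 2))) * key8 + (2 * a ^ 2) * h8inv
  have key4 : (4 * (s : A) ^ 2) * (4 * a ^ 2) = 1 := by
    linear_combination (4 * a * (s : A) + 1) * ha
  have h4inv : Ring.inverse (4 * (s : A) ^ 2) * (4 * (s : A) ^ 2) = 1 :=
    Ring.inverse_mul_cancel _ h4s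
  have hc2 : Ring.inverse (4 * (s : A) ^ 2) = 4 * a ^ 2 := by
    linear_combination (-(Ring.inverse (4 * (s : A) ^ 2))) * key4 + (4 * a ^ 2) * h4inv
  unfold ePlus eMinus
  rw [hb2, hc2, ← ha_def]
  refine ⟨?_, ?_, ?_, ?_, ?_, ?_⟩
  · linear_combination (4 * a ^ 3 + 4 * a ^ 4 * x) * hx +
      (a * (4 * a * (s : A) + 1) * x + a ^ 2 * (4 * a * (s : A) + 1) * x ^ 2) * ha
  · linear_combination (-4 * a ^ 3 + 4 * a ^ 4 * x) * hx +
      ((4 * a * (s : A) + 1) * (-(a * x) + a ^ 2 * x ^ 2)) * ha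
  · linear_combination (4 * a ^ 4 * x) * hx + ((4 * a * (s : A) + 1) * a ^ 2 * x ^ 2) * ha
  · ring
  · linear_combination (2 * a ^ 2) * hx + (2 * a * (s : A) * x - a * x ^ 2) * ha
  · linear_combination (2 * a ^ 2) * hx + (a * x ^ 2 + 2 * a * (s : A) * x) * ha
end
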